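/- Let a: [0,∞) → ℝ be locally integrable, let y₀ > 0, and let T > 0 be such that √y₀ − ∫₀ᵗ a(s) ds > 0 for every t ∈ [0,T]. Then the function y(t) := (√y₀ − ∫₀ᵗ a(s) ds)² is a strictly positive solution of the Cauchy problem y' + 2a√y = 0, y(0) = y₀ on [0,T], and it is the unique strictly positive solution there: every continuous z: [0,T] → (0,∞) satisfying z(t) = y₀ − 2∫₀ᵗ a(s)√(z(s)) ds for every t ∈ [0,T] coincides with y on [0,T]. -/

import Mathlib

/-!
Write `A t = ∫₀ᵗ a`. Since `A` is absolutely continuous with `A' = a` almost everywhere,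
integration by parts gives `∫₀ᵗ a A = A(t)² / 2`, which is exactly the integral equation for
`y = (√y₀ - A)²`.

Conversely, a positive continuous solution `z` is absolutely continuous, and so is `√z`,
because `√` is Lipschitz away from `0` and `z` is bounded below by a positive constant on a
compact interval. Almost everywhere `(√z)' = z' / (2√z) = -a`, hence `√z = √y₀ - A`, i.e. `z = y`.
-/

open MeasureTheory Set Filter

/-- `a` is locally integrable on `[0,∞)`. -/
def LocIntOn (a : ℝ → ℝ) : Prop :=
  ∀ t : ℝ, 0 ≤ t → MeasureTheory.IntegrableOn a (Set.Icc 0 t) MeasureTheory.volume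

/-- `y` is a nonnegative global solution of the Cauchy problem
`y' + 2 a √y = 0`, `y 0 = y₀`, in integral form. -/
def IsSol (a : ℝ → ℝ) (y₀ : ℝ) (y : ℝ → ℝ) : Prop :=
  ContinuousOn y (Set.Ici 0) ∧ (∀ t : ℝ, 0 ≤ t → 0 ≤ y t) ∧
    ∀ t : ℝ, 0 ≤ t → y t = y₀ - 2 * ∫ s in (0:ℝ)..t, a s * Real.sqrt (y s)

/-- Membership in the set `S(a, y₀)`. -/
def MemS (a : ℝ → ℝ) (y₀ : ℝ) (w : ℝ → ℝ) : Prop :=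
  (∀ t : ℝ, 0 ≤ t → 0 ≤ w t) ∧
    ∃ g : ℝ → ℝ,
      (∀ t : ℝ, 0 ≤ t → MeasureTheory.IntegrableOn g (Set.Icc 0 t) MeasureTheory.volume) ∧
      (∀ t : ℝ, 0 ≤ t → w t = Real.sqrt y₀ + ∫ s in (0:ℝ)..t, g s) ∧
      (∀ᵐ s ∂(MeasureTheory.volume : MeasureTheory.Measure ℝ), 0 ≤ s → 0 < w s → g s = -a s)

/-- `y` is the maximal nonnegative global solution. -/
def IsMaxSol (a : ℝ → ℝ) (y₀ : ℝ) (y : ℝ → ℝ) : Prop :=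
  IsSol a y₀ y ∧ ∀ z : ℝ → ℝ, IsSol a y₀ z → ∀ t : ℝ, 0 ≤ t → z t ≤ y t

open scoped NNReal

theorem LipschitzOnWith.comp_absolutelyContinuousOnInterval {X Y : Type*} [PseudoMetricSpace X]
    [PseudoMetricSpace Y] {f : ℝ → X} {g : X → Y} {K : ℝ≥0} {s : Set X} {a b : ℝ}
    (hg : LipschitzOnWith K g s) (hf : AbsolutelyContinuousOnInterval f a b)
    (hfs : MapsTo f (uIcc a b) s) : AbsolutelyContinuousOnInterval (g ∘ f) a b := by
  rw [absolutelyContinuousOnInterval_iff] at hf ⊢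
  intro ε hε
  obtain ⟨δ, hδ, hfδ⟩ := hf (ε / (K + 1)) (by positivity)
  refine ⟨δ, hδ, fun E hE hEδ => ?_⟩
  calc ∑ i ∈ Finset.range E.1, dist (g (f (E.2 i).1)) (g (f (E.2 i).2))
      ≤ ∑ i ∈ Finset.range E.1, K * dist (f (E.2 i).1) (f (E.2 i).2) :=
        Finset.sum_le_sum fun i hi =>
          hg.dist_le_mul _ (hfs (hE.1 i hi).1) _ (hfs (hE.1 i hi).2)
    _ = K * ∑ i ∈ Finset.range E.1, dist (f (E.2 i).1) (f (E.2 i).2) := (Finset.mul_sum ..).symm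
    _ ≤ K * (ε / (K + 1)) := by gcongr; exact (hfδ E hE hEδ).le
    _ < ε := by
        rw [mul_div_assoc', div_lt_iff₀ (by positivity)]
        nlinarith

theorem Real.lipschitzOnWith_sqrt_Ici {m : ℝ} (hm : 0 < m) :
    LipschitzOnWith (Real.toNNReal (1 / (2 * √m))) Real.sqrt (Ici m) := by
  refine LipschitzOnWith.of_dist_le' fun x hx y hy => ?_
  have hsum : 2 * √m ≤ √x + √y := by
    linarith [Real.sqrt_le_sqrt (mem_Ici.1 hx), Real.sqrt_le_sqrt (mem_Ici.1 hy)]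
  have hprod : (√x - √y) * (√x + √y) = x - y := by
    rw [mul_comm, ← sq_sub_sq, Real.sq_sqrt (hm.le.trans hx), Real.sq_sqrt (hm.le.trans hy)]
  have hm' : 0 < 2 * √m := by positivity
  rw [Real.dist_eq, Real.dist_eq, ← hprod, abs_mul, abs_of_pos (hm'.trans_le hsum),
    div_mul_eq_mul_div, one_mul, le_div_iff₀ hm']
  gcongr

namespace AbsolutelyContinuousOnInterval

variable {f : ℝ → ℝ} {a b : ℝ}

theorem sqrt (hf : AbsolutelyContinuousOnInterval f a b) (hpos : ∀ x ∈ uIcc a b, 0 < f x) :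
    AbsolutelyContinuousOnInterval (fun x => √(f x)) a b := by
  obtain ⟨c, hc, hmin⟩ := isCompact_uIcc.exists_isMinOn nonempty_uIcc hf.continuousOn
  exact (Real.lipschitzOnWith_sqrt_Ici (hpos c hc)).comp_absolutelyContinuousOnInterval hf
    fun x hx => hmin hx

theorem integral_deriv_div_two_mul_sqrt (hf : AbsolutelyContinuousOnInterval f a b)
    (hpos : ∀ x ∈ uIcc a b, 0 < f x) :
    ∫ x in a..b, deriv f x / (2 * √(f x)) = √(f b) - √(f a) := by
  rw [← (hf.sqrt hpos).integral_deriv_eq_sub]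
  refine intervalIntegral.integral_congr_ae ?_
  filter_upwards [hf.ae_differentiableAt] with x hdiff hx
  have hx := uIoc_subset_uIcc hx
  exact ((hdiff hx).hasDerivAt.sqrt (hpos x hx).ne').deriv.symm

end AbsolutelyContinuousOnInterval

namespace IntervalIntegrable

variable {g : ℝ → ℝ} {a b : ℝ}

theorem integral_mul_primitive (hg : IntervalIntegrable g volume a b) :
    ∫ x in a..b, g x * ∫ u in a..x, g u = (∫ x in a..b, g x) ^ 2 / 2 := by
  set G : ℝ → ℝ := fun x => ∫ u in a..x, g u
  have hG := hg.absolutelyContinuousOnInterval_intervalIntegral (c := a) left_mem_uIcc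
  have hderiv : ∀ᵐ x, x ∈ uIoc a b → deriv G x = g x := by
    filter_upwards [hg.ae_hasDerivAt_integral] with x hx hxab
    exact (hx (uIoc_subset_uIcc hxab) a left_mem_uIcc).deriv
  have hleft : ∫ x in a..b, G x * deriv G x = ∫ x in a..b, g x * G x :=
    intervalIntegral.integral_congr_ae <| hderiv.mono fun x hx hxab => by rw [hx hxab, mul_comm]
  have hright : ∫ x in a..b, deriv G x * G x = ∫ x in a..b, g x * G x :=
    intervalIntegral.integral_congr_ae <| hderiv.mono fun x hx hxab => by rw [hx hxab]
  have hparts := hG.integral_mul_deriv_eq_deriv_mul hG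
  simp only [G, intervalIntegral.integral_same, mul_zero, sub_zero] at hleft hright hparts
  rw [hleft, hright] at hparts
  linarith

theorem sqrt_sub_sqrt_eq_integral {z : ℝ → ℝ} (hg : IntervalIntegrable g volume a b)
    (hz : ∀ x ∈ uIcc a b, z x = z a + ∫ u in a..x, g u) (hpos : ∀ x ∈ uIcc a b, 0 < z x) :
    √(z b) - √(z a) = ∫ x in a..b, g x / (2 * √(z x)) := by
  set Z : ℝ → ℝ := fun x => z a + ∫ u in a..x, g u
  have hZz : ∀ x ∈ uIcc a b, Z x = z x := fun x hx => (hz x hx).symm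
  have hZ : AbsolutelyContinuousOnInterval Z a b :=
    (LipschitzWith.const (z a)).lipschitzOnWith.absolutelyContinuousOnInterval.add
      (hg.absolutelyContinuousOnInterval_intervalIntegral left_mem_uIcc)
  rw [← hZz a left_mem_uIcc, ← hZz b right_mem_uIcc,
    ← hZ.integral_deriv_div_two_mul_sqrt fun x hx => hZz x hx ▸ hpos x hx]
  refine intervalIntegral.integral_congr_ae ?_
  filter_upwards [hg.ae_hasDerivAt_integral] with x hx hxab
  have hxab := uIoc_subset_uIcc hxab
  rw [((hx hxab a left_mem_uIcc).const_add (z a)).deriv, hZz x hxab]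

end IntervalIntegrable

theorem sq_sub_integral_eq_sub_integral_mul_sqrt {a : ℝ → ℝ} {y₀ b c : ℝ} (hy₀ : 0 ≤ y₀)
    (ha : IntervalIntegrable a volume b c) (hpos : ∀ x ∈ uIcc b c, 0 ≤ √y₀ - ∫ u in b..x, a u) :
    (√y₀ - ∫ x in b..c, a x) ^ 2
      = y₀ - 2 * ∫ x in b..c, a x * √((√y₀ - ∫ u in b..x, a u) ^ 2) := by
  have hA := intervalIntegral.continuousOn_primitive_interval' ha left_mem_uIcc
  have hsqrt : ∫ x in b..c, a x * √((√y₀ - ∫ u in b..x, a u) ^ 2)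
      = ∫ x in b..c, (a x * √y₀ - a x * ∫ u in b..x, a u) :=
    intervalIntegral.integral_congr fun x hx => by
      simp only [Real.sqrt_sq (hpos x hx), mul_sub]
  rw [hsqrt, intervalIntegral.integral_sub (ha.mul_const _) (ha.mul_continuousOn hA),
    intervalIntegral.integral_mul_const, ha.integral_mul_primitive]
  linear_combination Real.sq_sqrt hy₀

theorem sqrt_eq_sqrt_sub_integral_of_eq_sub_integral_mul_sqrt {a z : ℝ → ℝ} {b c : ℝ}
    (ha : IntervalIntegrable a volume b c) (hzc : ContinuousOn z (uIcc b c))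
    (hpos : ∀ x ∈ uIcc b c, 0 < z x)
    (hz : ∀ x ∈ uIcc b c, z x = z b - 2 * ∫ u in b..x, a u * √(z u)) :
    √(z c) = √(z b) - ∫ x in b..c, a x := by
  have hg : IntervalIntegrable (fun x => -2 * (a x * √(z x))) volume b c :=
    (ha.mul_continuousOn hzc.sqrt).const_mul (-2)
  have hsqrt := hg.sqrt_sub_sqrt_eq_integral
    (fun x hx => by rw [intervalIntegral.integral_const_mul]; linarith [hz x hx]) hpos
  rw [intervalIntegral.integral_congr (g := fun x => -a x) fun x hx => by
    field_simp [(Real.sqrt_pos.2 (hpos x hx)).ne'], intervalIntegral.integral_neg] at hsqrt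
  linarith

theorem stmt7 (a : ℝ → ℝ) (y₀ T : ℝ) (ha : LocIntOn a) (hy₀ : 0 < y₀) (hT : 0 < T)
    (hpos : ∀ t ∈ Set.Icc (0:ℝ) T, 0 < Real.sqrt y₀ - ∫ s in (0:ℝ)..t, a s)
    (y : ℝ → ℝ) (hy : ∀ t : ℝ, y t = (Real.sqrt y₀ - ∫ s in (0:ℝ)..t, a s) ^ 2) :
    (ContinuousOn y (Set.Icc 0 T) ∧ (∀ t ∈ Set.Icc (0:ℝ) T, 0 < y t) ∧
      (∀ t ∈ Set.Icc (0:ℝ) T, y t = y₀ - 2 * ∫ s in (0:ℝ)..t, a s * Real.sqrt (y s))) ∧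
    ∀ z : ℝ → ℝ, ContinuousOn z (Set.Icc 0 T) → (∀ t ∈ Set.Icc (0:ℝ) T, 0 < z t) →
      (∀ t ∈ Set.Icc (0:ℝ) T, z t = y₀ - 2 * ∫ s in (0:ℝ)..t, a s * Real.sqrt (z s)) →
      ∀ t ∈ Set.Icc (0:ℝ) T, z t = y t := by
  have hIcc : ∀ t ∈ Icc 0 T, uIcc 0 t ⊆ Icc 0 T := fun t ht => by
    rw [uIcc_of_le ht.1]; exact Icc_subset_Icc le_rfl ht.2
  have haT : IntervalIntegrable a volume 0 T :=
    (intervalIntegrable_iff_integrableOn_Icc_of_le hT.le).2 (ha T hT.le)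
  have hat : ∀ t ∈ Icc 0 T, IntervalIntegrable a volume 0 t := fun t ht =>
    haT.mono_set (uIcc_of_le hT.le ▸ hIcc t ht)
  refine ⟨⟨?_, fun t ht => hy t ▸ pow_pos (hpos t ht) 2, fun t ht => ?_⟩,
    fun z hzc hzpos hz t ht => ?_⟩
  · have hA := intervalIntegral.continuousOn_primitive_interval' haT left_mem_uIcc
    rw [uIcc_of_le hT.le] at hA
    exact ((continuousOn_const.sub hA).pow 2).congr fun t _ => hy t
  · simp only [hy]
    exact sq_sub_integral_eq_sub_integral_mul_sqrt hy₀.le (hat t ht)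
      fun s hs => (hpos s (hIcc t ht hs)).le
  · have hz₀ : z 0 = y₀ := by simpa using hz 0 ⟨le_rfl, hT.le⟩
    have hsqrt_z := sqrt_eq_sqrt_sub_integral_of_eq_sub_integral_mul_sqrt (hat t ht)
      (hzc.mono (hIcc t ht)) (fun s hs => hzpos s (hIcc t ht hs))
      (fun s hs => hz₀ ▸ hz s (hIcc t ht hs))
    rw [← Real.sq_sqrt (hzpos t ht).le, hsqrt_z, hz₀, hy]
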